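/- arXiv:1210.6088 — 2 statements merged into one kernel-verified Lean document; each statement's English description precedes it below -/
import Mathlib

section
/- Let G be a finite digraph in which every vertex v satisfies indeg_G(v) ≥ 1 and outdeg_G(v) ≥ 1. Then ν(L(G)) ≥ ν(G), and ν(L(G)) = ν(G) if and only if G is canonical (every vertex is simple); in particular if some vertex of G is complicated then ν(L(G)) > ν(G). -/
universe u

/-- The line digraph of a digraph `G`: vertices are the edges of `G`. -/
def lineDigraph {V : Type u} (G : Digraph V) : Digraph {e : V × V // G.Adj e.1 e.2} where
  Adj e f := e.1.2 = f.1.1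

instance {V : Type u} (G : Digraph V) [Fintype V] [DecidableRel G.Adj] :
    Fintype {e : V × V // G.Adj e.1 e.2} :=
  Subtype.fintype _

instance {V : Type u} (G : Digraph V) [DecidableEq V] :
    DecidableRel (lineDigraph G).Adj :=
  fun e f => inferInstanceAs (Decidable (e.1.2 = f.1.1))

/-- The finset of (directed) edges of `G`. -/
def edgeFinset {V : Type u} (G : Digraph V) [Fintype V] [DecidableRel G.Adj] :
    Finset (V × V) :=
  Finset.univ.filter (fun p => G.Adj p.1 p.2)

/-- The indegree of a vertex. -/
def indeg {V : Type u} (G : Digraph V) [Fintype V] [DecidableRel G.Adj] (v : V) : ℕ :=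
  (Finset.univ.filter (fun u => G.Adj u v)).card

/-- The outdegree of a vertex. -/
def outdeg {V : Type u} (G : Digraph V) [Fintype V] [DecidableRel G.Adj] (v : V) : ℕ :=
  (Finset.univ.filter (fun w => G.Adj v w)).card

/-- The cyclomatic number `ν(G) = |E| - |V| + 1`, as an integer. -/
def cyclomatic {V : Type u} (G : Digraph V) [Fintype V] [DecidableRel G.Adj] : ℤ :=
  ((edgeFinset G).card : ℤ) - (Fintype.card V : ℤ) + 1

/-- A directed walk of length `k` in `G`. -/
def IsWalk {V : Type u} (G : Digraph V) {k : ℕ} (w : Fin (k + 1) → V) : Prop :=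
  ∀ i : Fin k, G.Adj (w i.castSucc) (w i.succ)

instance {V : Type u} (G : Digraph V) [DecidableRel G.Adj] {k : ℕ} :
    DecidablePred (IsWalk G (k := k)) :=
  fun w => inferInstanceAs (Decidable (∀ i : Fin k, G.Adj (w i.castSucc) (w i.succ)))

/-- A bundled finite digraph. -/
structure FinDigraph where
  V : Type
  [fin : Fintype V]
  [deq : DecidableEq V]
  G : Digraph V
  [dec : DecidableRel G.Adj]

attribute [instance] FinDigraph.fin FinDigraph.deq FinDigraph.dec

/-- One straight-converting step: the bundled line digraph. -/
def FinDigraph.line (H : FinDigraph) : FinDigraph where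
  V := {e : H.V × H.V // H.G.Adj e.1 e.2}
  G := lineDigraph H.G

/-- The `j`-fold iterated line digraph. -/
def FinDigraph.iterLine (H : FinDigraph) : ℕ → FinDigraph
  | 0 => H
  | j + 1 => (H.iterLine j).line

/-- Canonical: every vertex simple. -/
def FinDigraph.Canonical (H : FinDigraph) : Prop :=
  ∀ v : H.V, indeg H.G v ≤ 1 ∨ outdeg H.G v ≤ 1

/-- Contains a complicated vertex. -/
def FinDigraph.HasComplicated (H : FinDigraph) : Prop :=
  ∃ v : H.V, 2 ≤ indeg H.G v ∧ 2 ≤ outdeg H.G v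

/-- An `l₃₁`-interval of length `ℓ`. -/
def IsL31 {V : Type u} (G : Digraph V) [Fintype V] [DecidableRel G.Adj] {ℓ : ℕ}
    (w : Fin (ℓ + 1) → V) : Prop :=
  IsWalk G w ∧ 2 ≤ indeg G (w 0) ∧ 2 ≤ outdeg G (w (Fin.last ℓ)) ∧
    ∀ i : Fin (ℓ + 1), 0 < (i : ℕ) → (i : ℕ) < ℓ →
      indeg G (w i) = 1 ∧ outdeg G (w i) = 1

/-- A directed cycle of length `k`. -/
def IsCycle {V : Type u} (G : Digraph V) {k : ℕ} (w : Fin (k + 1) → V) : Prop :=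
  IsWalk G w ∧ w 0 = w (Fin.last k) ∧
    ∀ i j : Fin (k + 1), (i : ℕ) < k → (j : ℕ) < k → w i = w j → i = j

/-- `G` has a contour: a directed cycle with both an entry edge and an exit edge. -/
def HasContour {V : Type u} (G : Digraph V) : Prop :=
  ∃ (k : ℕ) (w : Fin (k + 2) → V), IsCycle G (k := k + 1) w ∧
    (∃ a b : V, G.Adj a b ∧ (∃ i, w i = b) ∧
      ¬ ∃ i : Fin (k + 1), w i.castSucc = a ∧ w i.succ = b) ∧
    (∃ a b : V, G.Adj a b ∧ (∃ i, w i = a) ∧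
      ¬ ∃ i : Fin (k + 1), w i.castSucc = a ∧ w i.succ = b)

section Aux

variable {V : Type u} [Fintype V] [DecidableEq V] (G : Digraph V) [DecidableRel G.Adj]

/-- Edges as a subtype, fibered by head. -/
def edgeEquivIn : {e : V × V // G.Adj e.1 e.2} ≃ Σ v : V, {u : V // G.Adj u v} where
  toFun e := ⟨e.1.2, e.1.1, e.2⟩
  invFun s := ⟨(s.2.1, s.1), s.2.2⟩
  left_inv := by rintro ⟨⟨a, b⟩, h⟩; rfl
  right_inv := by rintro ⟨v, u, h⟩; rfl

/-- Edges as a subtype, fibered by tail. -/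
def edgeEquivOut : {e : V × V // G.Adj e.1 e.2} ≃ Σ v : V, {w : V // G.Adj v w} where
  toFun e := ⟨e.1.1, e.1.2, e.2⟩
  invFun s := ⟨(s.1, s.2.1), s.2.2⟩
  left_inv := by rintro ⟨⟨a, b⟩, h⟩; rfl
  right_inv := by rintro ⟨v, w, h⟩; rfl

/-- Edges of the line digraph, fibered by the middle vertex. -/
def lineEdgeEquiv :
    {p : {e : V × V // G.Adj e.1 e.2} × {e : V × V // G.Adj e.1 e.2} //
        (lineDigraph G).Adj p.1 p.2} ≃
      Σ v : V, {u : V // G.Adj u v} × {w : V // G.Adj v w} where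
  toFun p := ⟨p.1.1.1.2, ⟨p.1.1.1.1, p.1.1.2⟩, ⟨p.1.2.1.2, by
    have h2 := p.1.2.2
    have he : p.1.1.1.2 = p.1.2.1.1 := p.2
    rw [he]; exact h2⟩⟩
  invFun s := ⟨(⟨(s.2.1.1, s.1), s.2.1.2⟩, ⟨(s.1, s.2.2.1), s.2.2.2⟩), rfl⟩
  left_inv := by
    rintro ⟨⟨⟨⟨a, b⟩, h1⟩, ⟨⟨c, d⟩, h2⟩⟩, he⟩
    have he' : b = c := he
    subst he'
    rfl
  right_inv := by rintro ⟨v, ⟨u, hu⟩, ⟨w, hw⟩⟩; rfl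

lemma card_edgeFinset_eq :
    (edgeFinset G).card = Fintype.card {e : V × V // G.Adj e.1 e.2} :=
  (Fintype.card_subtype _).symm

lemma card_edgeFinset_eq_sum_indeg :
    (edgeFinset G).card = ∑ v : V, indeg G v := by
  rw [card_edgeFinset_eq, Fintype.card_congr (edgeEquivIn G), Fintype.card_sigma]
  simp [indeg, Fintype.card_subtype]

lemma card_edgeFinset_eq_sum_outdeg :
    (edgeFinset G).card = ∑ v : V, outdeg G v := by
  rw [card_edgeFinset_eq, Fintype.card_congr (edgeEquivOut G), Fintype.card_sigma]
  simp [outdeg, Fintype.card_subtype]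

lemma card_line_edgeFinset :
    (edgeFinset (lineDigraph G)).card = ∑ v : V, indeg G v * outdeg G v := by
  rw [card_edgeFinset_eq, Fintype.card_congr (lineEdgeEquiv G), Fintype.card_sigma]
  simp [indeg, outdeg, Fintype.card_subtype]

lemma cyclomatic_line_sub :
    cyclomatic (lineDigraph G) - cyclomatic G =
      ∑ v : V, ((indeg G v : ℤ) - 1) * ((outdeg G v : ℤ) - 1) := by
  have expand : ∑ v : V, ((indeg G v : ℤ) - 1) * ((outdeg G v : ℤ) - 1) =
      (∑ v : V, (indeg G v : ℤ) * (outdeg G v : ℤ)) - (∑ v : V, (indeg G v : ℤ)) -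
        (∑ v : V, (outdeg G v : ℤ)) + (Fintype.card V : ℤ) := by
    rw [Finset.sum_congr rfl
      (fun v _ => by ring :
        ∀ v ∈ Finset.univ, ((indeg G v : ℤ) - 1) * ((outdeg G v : ℤ) - 1) =
          (indeg G v : ℤ) * (outdeg G v : ℤ) - (indeg G v : ℤ) - (outdeg G v : ℤ) + 1)]
    rw [Finset.sum_add_distrib, Finset.sum_sub_distrib, Finset.sum_sub_distrib,
      Finset.sum_const, Finset.card_univ, nsmul_eq_mul, mul_one]
  have hE : ((edgeFinset G).card : ℤ) = ∑ v : V, (indeg G v : ℤ) := by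
    rw [card_edgeFinset_eq_sum_indeg]; push_cast; rfl
  have hE' : ((edgeFinset G).card : ℤ) = ∑ v : V, (outdeg G v : ℤ) := by
    rw [card_edgeFinset_eq_sum_outdeg]; push_cast; rfl
  have hEL : ((edgeFinset (lineDigraph G)).card : ℤ) =
      ∑ v : V, (indeg G v : ℤ) * (outdeg G v : ℤ) := by
    rw [card_line_edgeFinset]; push_cast; rfl
  have hVL : ((Fintype.card {e : V × V // G.Adj e.1 e.2}) : ℤ) =
      ((edgeFinset G).card : ℤ) := by rw [card_edgeFinset_eq]
  unfold cyclomatic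
  rw [expand]
  rw [hVL, hEL]
  linarith [hE, hE']

end Aux

/-- if every vertex of `G` has indegree ≥ 1 and outdegree ≥ 1, then
`ν(L(G)) ≥ ν(G)`, with equality iff `G` is canonical (every vertex simple);
in particular if some vertex is complicated then `ν(L(G)) > ν(G)`. -/
theorem cyclomatic_line_digraph_ge {V : Type u} [Fintype V] [DecidableEq V]
    (G : Digraph V) [DecidableRel G.Adj]
    (h : ∀ v : V, 1 ≤ indeg G v ∧ 1 ≤ outdeg G v) :
    cyclomatic G ≤ cyclomatic (lineDigraph G) ∧
    (cyclomatic (lineDigraph G) = cyclomatic G ↔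
      ∀ v : V, indeg G v ≤ 1 ∨ outdeg G v ≤ 1) ∧
    ((∃ v : V, 2 ≤ indeg G v ∧ 2 ≤ outdeg G v) →
      cyclomatic G < cyclomatic (lineDigraph G)) := by
  have key := cyclomatic_line_sub G
  have hterm : ∀ v : V, 0 ≤ ((indeg G v : ℤ) - 1) * ((outdeg G v : ℤ) - 1) := by
    intro v
    have h1 : (1 : ℤ) ≤ (indeg G v : ℤ) := by exact_mod_cast (h v).1
    have h2 : (1 : ℤ) ≤ (outdeg G v : ℤ) := by exact_mod_cast (h v).2
    have := mul_nonneg (sub_nonneg.mpr h1) (sub_nonneg.mpr h2)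
    linarith
  have hsum : 0 ≤ ∑ v : V, ((indeg G v : ℤ) - 1) * ((outdeg G v : ℤ) - 1) :=
    Finset.sum_nonneg fun v _ => hterm v
  refine ⟨by linarith, ?_, ?_⟩
  · constructor
    · intro heq v
      have hz : ∑ v : V, ((indeg G v : ℤ) - 1) * ((outdeg G v : ℤ) - 1) = 0 := by
        linarith
      have := (Finset.sum_eq_zero_iff_of_nonneg fun v _ => hterm v).mp hz v
        (Finset.mem_univ v)
      rcases mul_eq_zero.mp this with h0 | h0
      · left; have : (indeg G v : ℤ) = 1 := by linarith
        exact_mod_cast this.le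
      · right; have : (outdeg G v : ℤ) = 1 := by linarith
        exact_mod_cast this.le
    · intro hcan
      have hz : ∀ v ∈ Finset.univ, ((indeg G v : ℤ) - 1) * ((outdeg G v : ℤ) - 1) = 0 := by
        intro v _
        rcases hcan v with h1 | h1
        · have : indeg G v = 1 := le_antisymm h1 (h v).1
          rw [this]; simp
        · have : outdeg G v = 1 := le_antisymm h1 (h v).2
          rw [this]; simp
      have : ∑ v : V, ((indeg G v : ℤ) - 1) * ((outdeg G v : ℤ) - 1) = 0 :=
        Finset.sum_eq_zero hz
      linarith
  · rintro ⟨v, hv1, hv2⟩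
    have hpos : 0 < ((indeg G v : ℤ) - 1) * ((outdeg G v : ℤ) - 1) := by
      have h1 : (2 : ℤ) ≤ (indeg G v : ℤ) := by exact_mod_cast hv1
      have h2 : (2 : ℤ) ≤ (outdeg G v : ℤ) := by exact_mod_cast hv2
      have := mul_pos (by linarith : (0:ℤ) < (indeg G v : ℤ) - 1)
        (by linarith : (0:ℤ) < (outdeg G v : ℤ) - 1)
      exact this
    have : 0 < ∑ v : V, ((indeg G v : ℤ) - 1) * ((outdeg G v : ℤ) - 1) :=
      Finset.sum_pos' (fun v _ => hterm v) ⟨v, Finset.mem_univ v, hpos⟩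
    linarith
end

section
/- Corollary to Theorem 11 (heteronomous bound): let G be a canonical finite digraph that contains at least one l₃₁-interval, and let ℓ be the minimum length of an l₃₁-interval of G. Then L^i(G) is canonical for every i < ℓ, and L^ℓ(G) contains a complicated vertex; i.e., the largest number of converting steps under which all iterates remain canonical equals the length of the shortest l₃₁-type interval of G. -/
universe u

/-!
A vertex `e = (u, v)` of `L(G)` has the indegree of `u` and the outdegree of `v`, so walks of
length `k` in `L(G)` from a convergent to a divergent vertex are the same as such walks of length
`k + 1` in `G`. Iterating, `L^i(G)` has a complicated vertex (such a walk of length `0`) iff `G`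
has such a walk of length `i`. An `l₃₁`-interval is one, and conversely in a canonical digraph
every such walk contains an `l₃₁`-interval: an interior vertex that is not elementary is
convergent or divergent, and the walk can be cut there.
-/

section Degrees

variable {V : Type u} {G : Digraph V} [Fintype V] [DecidableRel G.Adj]

lemma indeg_pos_of_adj {u v : V} (h : G.Adj u v) : 0 < indeg G v :=
  Finset.card_pos.2 ⟨u, by simpa using h⟩

lemma outdeg_pos_of_adj {u v : V} (h : G.Adj u v) : 0 < outdeg G u :=
  Finset.card_pos.2 ⟨v, by simpa using h⟩

variable (G) [DecidableEq V]

lemma indeg_lineDigraph (e : {e : V × V // G.Adj e.1 e.2}) :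
    indeg (lineDigraph G) e = indeg G e.1.1 := by
  simp only [indeg, ← Fintype.card_subtype]
  exact Fintype.card_congr
    { toFun := fun f => ⟨f.1.1.1, f.2 ▸ f.1.2⟩
      invFun := fun u => ⟨⟨(u.1, e.1.1), u.2⟩, rfl⟩
      left_inv := fun f => Subtype.ext <| Subtype.ext <| Prod.ext rfl f.2.symm
      right_inv := fun _ => rfl }

lemma outdeg_lineDigraph (e : {e : V × V // G.Adj e.1 e.2}) :
    outdeg (lineDigraph G) e = outdeg G e.1.2 := by
  simp only [outdeg, ← Fintype.card_subtype]
  exact Fintype.card_congr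
    { toFun := fun f => ⟨f.1.1.2, f.2 ▸ f.1.2⟩
      invFun := fun u => ⟨⟨(e.1.2, u.1), u.2⟩, rfl⟩
      left_inv := fun f => Subtype.ext <| Subtype.ext <| Prod.ext f.2 rfl
      right_inv := fun _ => rfl }

end Degrees

section ConvDivWalk

variable {V : Type u} (G : Digraph V) [Fintype V] [DecidableRel G.Adj]

def HasConvDivWalk (k : ℕ) : Prop :=
  ∃ w : Fin (k + 1) → V, IsWalk G w ∧ 2 ≤ indeg G (w 0) ∧ 2 ≤ outdeg G (w (Fin.last k))

variable {G}

lemma IsL31.hasConvDivWalk {ℓ : ℕ} {w : Fin (ℓ + 1) → V} (hw : IsL31 G w) :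
    HasConvDivWalk G ℓ :=
  ⟨w, hw.1, hw.2.1, hw.2.2.1⟩

lemma hasConvDivWalk_zero_iff :
    HasConvDivWalk G 0 ↔ ∃ v, 2 ≤ indeg G v ∧ 2 ≤ outdeg G v :=
  ⟨fun ⟨w, _, h0, h1⟩ => ⟨w 0, h0, h1⟩, fun ⟨v, h0, h1⟩ => ⟨fun _ => v, Fin.elim0, h0, h1⟩⟩

lemma hasConvDivWalk_of_isWalk {k : ℕ} {w : Fin (k + 1) → V} (hw : IsWalk G w)
    {a b : Fin (k + 1)} (hab : a ≤ b) (ha : 2 ≤ indeg G (w a)) (hb : 2 ≤ outdeg G (w b)) :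
    HasConvDivWalk G (b - a) := by
  have hab : (a : ℕ) ≤ b := hab
  refine ⟨fun t => w ⟨a + t, by omega⟩, fun t => ?_, ?_, ?_⟩
  · convert hw ⟨a + t, by omega⟩ using 2 <;> ext <;> simp [add_assoc]
  · simpa using ha
  · convert hb using 3; ext; simp; omega

lemma hasConvDivWalk_lineDigraph_iff [DecidableEq V] (k : ℕ) :
    HasConvDivWalk (lineDigraph G) k ↔ HasConvDivWalk G (k + 1) := by
  constructor
  · rintro ⟨w, hw, h0, hk⟩
    refine ⟨Fin.snoc (fun j => (w j).1.1) (w (Fin.last k)).1.2, fun j => ?_, ?_, ?_⟩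
    · induction j using Fin.lastCases with
      | last => simpa using (w (Fin.last k)).2
      | cast j =>
        simp only [Fin.succ_castSucc, Fin.snoc_castSucc]
        exact (hw j).symm ▸ (w j.castSucc).2
    · rw [← Fin.castSucc_zero, Fin.snoc_castSucc]
      simpa [indeg_lineDigraph] using h0
    · simpa [outdeg_lineDigraph] using hk
  · rintro ⟨v, hv, h0, hk⟩
    refine ⟨fun j => ⟨(v j.castSucc, v j.succ), hv j⟩, fun j => ?_, ?_, ?_⟩
    · exact congrArg v (Fin.succ_castSucc j).symm
    · simpa [indeg_lineDigraph] using h0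
    · simpa [outdeg_lineDigraph] using hk

lemma exists_isL31_of_hasConvDivWalk (hcan : ∀ v, indeg G v ≤ 1 ∨ outdeg G v ≤ 1) {i : ℕ}
    (h : HasConvDivWalk G i) : ∃ ℓ, 1 ≤ ℓ ∧ ℓ ≤ i ∧ ∃ w : Fin (ℓ + 1) → V, IsL31 G w := by
  induction i using Nat.strong_induction_on with
  | _ i ih =>
  obtain ⟨w, hw, hconv, hdiv⟩ := h
  have hi : 1 ≤ i := by
    rcases Nat.eq_zero_or_pos i with rfl | hi
    · have := hcan (w 0)
      simp only [Fin.last_zero] at hdiv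
      omega
    · exact hi
  by_cases helem : ∀ j : Fin (i + 1), 0 < (j : ℕ) → (j : ℕ) < i →
      indeg G (w j) = 1 ∧ outdeg G (w j) = 1
  · exact ⟨i, hi, le_rfl, w, hw, hconv, hdiv, helem⟩
  push Not at helem
  obtain ⟨j, hj0, hji, hj⟩ := helem
  have hin : 0 < indeg G (w j) := by
    have := indeg_pos_of_adj (hw ⟨j - 1, by omega⟩)
    rwa [show (⟨j - 1, _⟩ : Fin i).succ = j by ext; simp; omega] at this
  have hout : 0 < outdeg G (w j) := by
    have := outdeg_pos_of_adj (hw ⟨j, hji⟩)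
    rwa [show (⟨j, hji⟩ : Fin i).castSucc = j from rfl] at this
  by_cases hjconv : 2 ≤ indeg G (w j)
  · obtain ⟨ℓ, hℓ, hℓi, hL⟩ :=
      ih _ (by rw [Fin.val_last]; omega)
        (hasConvDivWalk_of_isWalk hw (Fin.le_last j) hjconv hdiv)
    exact ⟨ℓ, hℓ, by rw [Fin.val_last] at hℓi; omega, hL⟩
  · obtain ⟨ℓ, hℓ, hℓi, hL⟩ :=
      ih _ (by rw [Fin.val_zero]; omega)
        (hasConvDivWalk_of_isWalk hw (Fin.zero_le j) hconv (by omega))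
    exact ⟨ℓ, hℓ, by rw [Fin.val_zero] at hℓi; omega, hL⟩

end ConvDivWalk

namespace FinDigraph

lemma canonical_iff_not_hasComplicated (H : FinDigraph) : H.Canonical ↔ ¬ H.HasComplicated := by
  simp only [Canonical, HasComplicated, not_exists, not_and, not_le]
  exact forall_congr' fun v => by omega

lemma hasComplicated_iff_hasConvDivWalk_zero (H : FinDigraph) :
    H.HasComplicated ↔ HasConvDivWalk H.G 0 :=
  hasConvDivWalk_zero_iff.symm

lemma iterLine_succ_eq_iterLine_line (H : FinDigraph) (j : ℕ) :
    H.iterLine (j + 1) = H.line.iterLine j := by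
  induction j with
  | zero => rfl
  | succ j ih => exact congrArg line ih

lemma hasConvDivWalk_iterLine_iff (H : FinDigraph) (i k : ℕ) :
    HasConvDivWalk (H.iterLine i).G k ↔ HasConvDivWalk H.G (k + i) := by
  induction i generalizing H with
  | zero => rfl
  | succ i ih =>
    rw [iterLine_succ_eq_iterLine_line, ih]
    exact hasConvDivWalk_lineDigraph_iff (G := H.G) (k + i)

end FinDigraph

theorem heteronomous_bound_general (H : FinDigraph) (hcan : H.Canonical)
    (ℓ : ℕ)
    (hex : ∃ w : Fin (ℓ + 1) → H.V, IsL31 H.G w)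
    (hmin : ∀ ℓ' : ℕ, 1 ≤ ℓ' → ∀ w : Fin (ℓ' + 1) → H.V,
      IsL31 H.G w → ℓ ≤ ℓ') :
    (∀ i < ℓ, (H.iterLine i).Canonical) ∧ (H.iterLine ℓ).HasComplicated := by
  refine ⟨fun i hi => ?_, ?_⟩
  · rw [FinDigraph.canonical_iff_not_hasComplicated,
      FinDigraph.hasComplicated_iff_hasConvDivWalk_zero, FinDigraph.hasConvDivWalk_iterLine_iff,
      zero_add]
    intro hwalk
    obtain ⟨ℓ', hℓ', hℓ'i, w, hw⟩ := exists_isL31_of_hasConvDivWalk hcan hwalk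
    exact absurd (hmin ℓ' hℓ' w hw) (by omega)
  · rw [FinDigraph.hasComplicated_iff_hasConvDivWalk_zero,
      FinDigraph.hasConvDivWalk_iterLine_iff, zero_add]
    obtain ⟨w, hw⟩ := hex
    exact hw.hasConvDivWalk

/-- Corollary to Theorem 11: if `G` is canonical and `ℓ ≥ 1` is the
minimum length of an `l₃₁`-interval of `G`, then `L^i(G)` is canonical for all
`i < ℓ`, while `L^ℓ(G)` contains a complicated vertex. -/
theorem heteronomous_bound (H : FinDigraph) (hcan : H.Canonical)
    (ℓ : ℕ) (hℓ : 1 ≤ ℓ)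
    (hex : ∃ w : Fin (ℓ + 1) → H.V, IsL31 H.G w)
    (hmin : ∀ ℓ' : ℕ, 1 ≤ ℓ' → ∀ w : Fin (ℓ' + 1) → H.V,
      IsL31 H.G w → ℓ ≤ ℓ') :
    (∀ i < ℓ, (H.iterLine i).Canonical) ∧ (H.iterLine ℓ).HasComplicated :=
  heteronomous_bound_general H hcan ℓ hex hmin
end
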